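/- Let m be a positive integer and let R_{m,1} ∈ (0,1) be the unique positive root of ((−r^m − log(1−r^m))/(2r^m))·(−(1/r^m)log(1−r^m) + (1/r^m)log(1+r^m) + 2/(1+r^m)) + 2(r²/(1−r) + r + 2 + (2/r)log(1−r)) − (1/r^m)log(1+r^m) = 0. Then for every r with R_{m,1} < r < 1 there exist a ∈ (0,1) such that, with ω(z) = z^m and f_a(z) = (a+z)/(1+az) (whose Taylor coefficients are a₀ = a and a_k = (1−a²)(−a)^{k−1} for k ≥ 1), one has |Cf_a(r^m)| + |Cf_a′(r^m)|·φ₁(r^m) + Σ_{k=2}^∞ |a_k| φ_k(r) > (1/r^m) log(1/(1−r^m)). Hence the radius R_{m,1} is best possible. -/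

import Mathlib

open Set Metric

/-- The Cesàro operator: `Cf(z) = ∫₀¹ f(tz)/(1 - tz) dt`. -/
noncomputable def cesaro (f : ℂ → ℂ) (z : ℂ) : ℂ :=
  ∫ t in (0:ℝ)..1, f ((t : ℂ) * z) / (1 - (t : ℂ) * z)

/-- `φ_k(r) = Σ_{i=k}^∞ r^i/(i+1)`. -/
noncomputable def phi (k : ℕ) (r : ℝ) : ℝ :=
  ∑' i : ℕ, r ^ (k + i) / (k + i + 1)

set_option maxHeartbeats 1000000

open intervalIntegral

section AuxSeries

lemma hasSum_g {x : ℝ} (hx0 : 0 < x) (hx1 : x < 1) :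
    HasSum (fun n : ℕ => x ^ n / (n + 1)) (-Real.log (1 - x) / x) := by
  have h := Real.hasSum_pow_div_log_of_abs_lt_one (x := x) (by rw [abs_of_pos hx0]; exact hx1)
  have h2 := h.mul_left x⁻¹
  have he : (fun n : ℕ => x⁻¹ * (x ^ (n+1) / ((n : ℝ)+1))) = fun n : ℕ => x ^ n / ((n : ℝ)+1) := by
    funext n
    rw [pow_succ]
    field_simp
  rw [he] at h2
  convert h2 using 1
  · rfl
  field_simp

lemma summable_g {x : ℝ} (hx0 : 0 < x) (hx1 : x < 1) :
    Summable (fun n : ℕ => x ^ n / (n + 1)) := (hasSum_g hx0 hx1).summable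

lemma phi_nonneg {x : ℝ} (hx0 : 0 ≤ x) (k : ℕ) : 0 ≤ phi k x :=
  tsum_nonneg fun i => div_nonneg (pow_nonneg hx0 _) (by positivity)

lemma phi_le {x : ℝ} (hx0 : 0 < x) (hx1 : x < 1) (k : ℕ) :
    phi k x ≤ x ^ k / (1 - x) := by
  have hsg : Summable (fun i : ℕ => x ^ k * x ^ i) :=
    (summable_geometric_of_lt_one hx0.le hx1).mul_left _
  have h1 : phi k x ≤ ∑' i : ℕ, x ^ k * x ^ i := by
    apply Summable.tsum_le_tsum _ _ hsg
    · intro i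
      rw [← pow_add]
      apply div_le_self (by positivity) (by push_cast; linarith [Nat.cast_nonneg (α := ℝ) k, Nat.cast_nonneg (α := ℝ) i])
    · apply Summable.of_nonneg_of_le (fun i => by positivity) _ hsg
      intro i
      rw [← pow_add]
      apply div_le_self (by positivity) (by push_cast; linarith [Nat.cast_nonneg (α := ℝ) k, Nat.cast_nonneg (α := ℝ) i])
  calc phi k x ≤ ∑' i : ℕ, x ^ k * x ^ i := h1
    _ = x ^ k * (1 - x)⁻¹ := by rw [tsum_mul_left, tsum_geometric_of_lt_one hx0.le hx1]
    _ = x ^ k / (1 - x) := by rw [div_eq_mul_inv]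

lemma summable_phi_inner {x : ℝ} (hx0 : 0 < x) (hx1 : x < 1) (k : ℕ) :
    Summable (fun i : ℕ => x ^ (k + i) / ((k : ℝ) + (i : ℝ) + 1)) := by
  apply Summable.of_nonneg_of_le (fun i => by positivity)
    (f := fun i : ℕ => x ^ k * x ^ i)
  · intro i
    rw [← pow_add]
    apply div_le_self (by positivity) (by linarith [Nat.cast_nonneg (α := ℝ) k, Nat.cast_nonneg (α := ℝ) i])
  · exact (summable_geometric_of_lt_one hx0.le hx1).mul_left _

lemma summable_phi {x : ℝ} (hx0 : 0 < x) (hx1 : x < 1) :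
    Summable (fun k : ℕ => phi (k + 2) x) := by
  apply Summable.of_nonneg_of_le (fun k => phi_nonneg hx0.le _)
    (f := fun k : ℕ => x ^ (k + 2) / (1 - x))
  · exact fun k => phi_le hx0 hx1 _
  · have : Summable (fun k : ℕ => x ^ k) := summable_geometric_of_lt_one hx0.le hx1
    apply Summable.of_nonneg_of_le (fun k => div_nonneg (by positivity) (by linarith))
      (f := fun k : ℕ => (x ^ 2 / (1 - x)) * x ^ k) _ (this.mul_left _)
    intro k
    rw [pow_add]
    ring_nf
    exact le_refl _


lemma tsum_phi_eq {x : ℝ} (hx0 : 0 < x) (hx1 : x < 1) :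
    ∑' k : ℕ, phi (k + 2) x = x ^ 2 / (1 - x) + x + 2 + (2 / x) * Real.log (1 - x) := by
  set g : ℕ → ℝ := fun n => x ^ n / (n + 1) with hg
  have hgnn : ∀ n, 0 ≤ g n := fun n => div_nonneg (by positivity) (by positivity)
  have hsg : Summable g := summable_g hx0 hx1
  set F : ℕ → ℕ → ℝ := fun k n => if k + 2 ≤ n then g n else 0 with hF
  have hFnn : ∀ k n, 0 ≤ F k n := by
    intro k n; simp only [hF]; split <;> simp [hgnn]
  have hFle : ∀ k n, F k n ≤ g n := by
    intro k n; simp only [hF]; split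
    · exact le_refl _
    · exact hgnn n
  -- Step A: phi (k+2) x = ∑' n, F k n
  have hA : ∀ k : ℕ, phi (k + 2) x = ∑' n, F k n := by
    intro k
    have hinj : Function.Injective (fun i : ℕ => i + (k + 2)) := add_left_injective _
    have hsupp : Function.support (F k) ⊆ Set.range (fun i : ℕ => i + (k + 2)) := by
      intro n hn
      simp only [Function.mem_support, hF] at hn
      by_cases h : k + 2 ≤ n
      · exact ⟨n - (k + 2), Nat.sub_add_cancel h⟩
      · simp [h] at hn
    have := hinj.tsum_eq hsupp
    rw [← this]
    unfold phi
    congr 1; funext i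
    have h1 : k + 2 ≤ i + (k + 2) := by omega
    simp only [hF, if_pos h1, hg]
    have h2 : k + 2 + i = i + (k + 2) := by omega
    rw [h2]
    push_cast
    ring_nf
  -- row summability
  have hrow : ∀ k, Summable (F k) :=
    fun k => Summable.of_nonneg_of_le (fun n => hFnn k n) (fun n => hFle k n) hsg
  -- column summability (finite support)
  have hcol : ∀ n, Summable (fun k => F k n) := by
    intro n
    apply summable_of_ne_finset_zero (s := Finset.range n)
    intro k hk
    simp only [Finset.mem_range, not_lt] at hk
    simp only [hF, if_neg (by omega : ¬ k + 2 ≤ n)]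
  -- summability of phi sums
  have hphis : Summable (fun k : ℕ => ∑' n, F k n) := by
    have : (fun k : ℕ => ∑' n, F k n) = fun k => phi (k + 2) x := by
      funext k; rw [hA k]
    rw [this]
    exact summable_phi hx0 hx1
  -- uncurry summable
  have huncurry : Summable (Function.uncurry F) := by
    exact (summable_prod_of_nonneg (fun p => hFnn p.1 p.2)).2 ⟨hrow, hphis⟩
  -- swap
  have hswap : ∑' k, ∑' n, F k n = ∑' n, ∑' k, F k n :=
    (Summable.tsum_comm' huncurry hrow hcol).symm
  -- Step D: inner column sums
  have hD : ∀ n : ℕ, ∑' k, F k n = if 2 ≤ n then ((n : ℝ) - 1) * g n else 0 := by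
    intro n
    by_cases h2n : 2 ≤ n
    · rw [if_pos h2n]
      rw [tsum_eq_sum (s := Finset.range (n - 1))
        (by intro k hk; simp only [Finset.mem_range, not_lt] at hk
            simp only [hF, if_neg (by omega : ¬ k + 2 ≤ n)])]
      have : ∀ k ∈ Finset.range (n - 1), F k n = g n := by
        intro k hk; simp only [Finset.mem_range] at hk
        simp only [hF, if_pos (by omega : k + 2 ≤ n)]
      rw [Finset.sum_congr rfl this, Finset.sum_const, Finset.card_range, nsmul_eq_mul]
      congr 1
      have : (1 : ℕ) ≤ n := by omega
      push_cast [Nat.cast_sub this]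
      ring
    · rw [if_neg h2n]
      have : ∀ k, F k n = 0 := by
        intro k; simp only [hF, if_neg (by omega : ¬ k + 2 ≤ n)]
      simp [this]
  -- Step E
  have hgsum2 : ∑' i : ℕ, g (i + 2) = -Real.log (1 - x) / x - 1 - x / 2 := by
    have h := Summable.sum_add_tsum_nat_add (f := g) 2 hsg
    rw [(hasSum_g hx0 hx1).tsum_eq] at h
    have hs2 : ∑ i ∈ Finset.range 2, g i = 1 + x / 2 := by
      simp [hg, Finset.sum_range_succ]
      norm_num
    rw [hs2] at h
    linarith
  have hxgeom : ∑' i : ℕ, x ^ (i + 2) = x ^ 2 / (1 - x) := by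
    have : (fun i : ℕ => x ^ (i + 2)) = fun i : ℕ => x ^ 2 * x ^ i := by
      funext i; rw [pow_add]; ring
    rw [this, tsum_mul_left, tsum_geometric_of_lt_one hx0.le hx1, div_eq_mul_inv]
  -- shift lemmas for ite sums
  have hshift : ∀ h : ℕ → ℝ, (∑' n : ℕ, if 2 ≤ n then h n else 0) = ∑' i : ℕ, h (i + 2) := by
    intro h
    have hinj : Function.Injective (fun i : ℕ => i + 2) := add_left_injective _
    have hsupp : Function.support (fun n => if 2 ≤ n then h n else 0) ⊆
        Set.range (fun i : ℕ => i + 2) := by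
      intro n hn
      simp only [Function.mem_support] at hn
      by_cases hc : 2 ≤ n
      · exact ⟨n - 2, Nat.sub_add_cancel hc⟩
      · simp [hc] at hn
    have := hinj.tsum_eq (f := fun n => if 2 ≤ n then h n else 0) hsupp
    rw [← this]
    congr 1
  -- decompose
  have hdecomp : ∀ n : ℕ, (if 2 ≤ n then ((n : ℝ) - 1) * g n else 0) =
      (if 2 ≤ n then x ^ n else 0) - (if 2 ≤ n then 2 * g n else 0) := by
    intro n
    by_cases h2n : 2 ≤ n
    · simp only [if_pos h2n, hg]
      have hn1 : (0:ℝ) < (n : ℝ) + 1 := by positivity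
      field_simp
      ring
    · simp [h2n]
  have hsumA : Summable (fun n : ℕ => if 2 ≤ n then x ^ n else 0) := by
    apply Summable.of_nonneg_of_le (f := fun n : ℕ => x ^ n) _ _
      (summable_geometric_of_lt_one hx0.le hx1)
    · intro n; by_cases h : 2 ≤ n
      · rw [if_pos h]; positivity
      · rw [if_neg h]
    · intro n; by_cases h : 2 ≤ n
      · rw [if_pos h]
      · rw [if_neg h]; positivity
  have hsumB : Summable (fun n : ℕ => if 2 ≤ n then 2 * g n else 0) := by
    apply Summable.of_nonneg_of_le (f := fun n : ℕ => 2 * g n) _ _ (hsg.mul_left 2)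
    · intro n; by_cases h : 2 ≤ n
      · rw [if_pos h]; exact mul_nonneg (by norm_num) (hgnn n)
      · rw [if_neg h]
    · intro n; by_cases h : 2 ≤ n
      · rw [if_pos h]
      · rw [if_neg h]; exact mul_nonneg (by norm_num) (hgnn n)
  calc ∑' k : ℕ, phi (k + 2) x = ∑' k, ∑' n, F k n := by
        congr 1; funext k; exact hA k
    _ = ∑' n, ∑' k, F k n := hswap
    _ = ∑' n : ℕ, ((if 2 ≤ n then x ^ n else 0) - (if 2 ≤ n then 2 * g n else 0)) := by
        congr 1; funext n; rw [hD n, hdecomp n]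
    _ = (∑' n : ℕ, if 2 ≤ n then x ^ n else 0) - (∑' n : ℕ, if 2 ≤ n then 2 * g n else 0) :=
        Summable.tsum_sub hsumA hsumB
    _ = x ^ 2 / (1 - x) - 2 * (-Real.log (1 - x) / x - 1 - x / 2) := by
        rw [hshift (fun n => x ^ n), hshift (fun n => 2 * g n), hxgeom]
        rw [tsum_mul_left, hgsum2]
    _ = x ^ 2 / (1 - x) + x + 2 + (2 / x) * Real.log (1 - x) := by
        field_simp
        ring


lemma phi_eq {x : ℝ} (hx0 : 0 < x) (hx1 : x < 1) (k : ℕ) :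
    phi k x = -Real.log (1 - x) / x - ∑ i ∈ Finset.range k, x ^ i / (i + 1) := by
  have hs := summable_g hx0 hx1
  have h := Summable.sum_add_tsum_nat_add (f := fun n : ℕ => x ^ n / (n + 1)) k hs
  rw [(hasSum_g hx0 hx1).tsum_eq] at h
  have : phi k x = ∑' i : ℕ, x ^ (i + k) / ((i : ℝ) + (k : ℝ) + 1) := by
    unfold phi
    congr 1; funext i; rw [add_comm k i]
    ring_nf
  rw [this]
  have h2 : (∑' i : ℕ, x ^ (i + k) / ((i : ℝ) + (k : ℝ) + 1)) =
      ∑' i : ℕ, x ^ (i + k) / (((i + k : ℕ) : ℝ) + 1) := by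
    congr 1; funext i; push_cast; ring_nf
  rw [h2]
  linarith [h]


end AuxSeries

section AuxInt

lemma aux_pos {x : ℝ} (hx1 : x < 1) (hx0 : 0 ≤ x) {t : ℝ} (ht : t ∈ Set.Icc (0:ℝ) 1) :
    0 < 1 - t * x := by
  rcases ht with ⟨ht0, ht1⟩
  nlinarith

lemma int_one_sub {x : ℝ} (hx0 : 0 < x) (hx1 : x < 1) :
    ∫ t in (0:ℝ)..1, (1 - t * x)⁻¹ = -Real.log (1 - x) / x := by
  have huIcc : Set.uIcc (0:ℝ) 1 = Set.Icc 0 1 := Set.uIcc_of_le zero_le_one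
  have hpos : ∀ t ∈ Set.Icc (0:ℝ) 1, 0 < 1 - t * x := fun t ht => aux_pos hx1 hx0.le ht
  have hderiv : ∀ t ∈ Set.uIcc (0:ℝ) 1,
      HasDerivAt (fun t => -(Real.log (1 - t * x) / x)) ((1 - t * x)⁻¹) t := by
    intro t ht
    rw [huIcc] at ht
    have hne : 1 - t * x ≠ 0 := (hpos t ht).ne'
    have h1 : HasDerivAt (fun t : ℝ => 1 - t * x) (-x) t := by
      simpa using ((hasDerivAt_id t).mul_const x).const_sub 1
    have h2 : HasDerivAt (fun t : ℝ => Real.log (1 - t * x)) ((1 - t * x)⁻¹ * (-x)) t :=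
      (Real.hasDerivAt_log hne).comp (h₂ := Real.log) t h1
    have h3 := (h2.div_const x).neg
    refine h3.congr_deriv ?_
    rw [mul_neg, neg_div, neg_neg, mul_div_assoc, div_self hx0.ne', mul_one]
  have hint : IntervalIntegrable (fun t : ℝ => (1 - t * x)⁻¹) MeasureTheory.volume 0 1 := by
    apply ContinuousOn.intervalIntegrable
    rw [huIcc]
    exact ContinuousOn.inv₀ (by fun_prop) (fun t ht => (hpos t ht).ne')
  rw [integral_eq_sub_of_hasDerivAt hderiv hint]
  norm_num [neg_div]

lemma int_one_add {c : ℝ} (hc : 0 < c) :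
    ∫ t in (0:ℝ)..1, (1 + t * c)⁻¹ = Real.log (1 + c) / c := by
  have huIcc : Set.uIcc (0:ℝ) 1 = Set.Icc 0 1 := Set.uIcc_of_le zero_le_one
  have hpos : ∀ t ∈ Set.Icc (0:ℝ) 1, 0 < 1 + t * c := by
    intro t ht; rcases ht with ⟨ht0, _⟩; nlinarith
  have hderiv : ∀ t ∈ Set.uIcc (0:ℝ) 1,
      HasDerivAt (fun t => Real.log (1 + t * c) / c) ((1 + t * c)⁻¹) t := by
    intro t ht
    rw [huIcc] at ht
    have hne : 1 + t * c ≠ 0 := (hpos t ht).ne'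
    have h1 : HasDerivAt (fun t : ℝ => 1 + t * c) c t := by
      simpa using ((hasDerivAt_id t).mul_const c).const_add 1
    have h2 : HasDerivAt (fun t : ℝ => Real.log (1 + t * c)) ((1 + t * c)⁻¹ * c) t :=
      (Real.hasDerivAt_log hne).comp (h₂ := Real.log) t h1
    have h3 := h2.div_const c
    refine h3.congr_deriv ?_
    rw [mul_div_assoc, div_self hc.ne', mul_one]
  have hint : IntervalIntegrable (fun t : ℝ => (1 + t * c)⁻¹) MeasureTheory.volume 0 1 := by
    apply ContinuousOn.intervalIntegrable
    rw [huIcc]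
    exact ContinuousOn.inv₀ (by fun_prop) (fun t ht => (hpos t ht).ne')
  rw [integral_eq_sub_of_hasDerivAt hderiv hint]
  simp [Real.log_one]

lemma int_J {x : ℝ} (hx0 : 0 < x) (hx1 : x < 1) :
    ∫ t in (0:ℝ)..1, ((1 + t * x) ^ 2 * (1 - t * x))⁻¹ =
      (-(1/x) * Real.log (1 - x) + (1/x) * Real.log (1 + x) + 2 / (1 + x)) / 4 := by
  have huIcc : Set.uIcc (0:ℝ) 1 = Set.Icc 0 1 := Set.uIcc_of_le zero_le_one
  have hposm : ∀ t ∈ Set.Icc (0:ℝ) 1, 0 < 1 - t * x := fun t ht => aux_pos hx1 hx0.le ht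
  have hposp : ∀ t ∈ Set.Icc (0:ℝ) 1, 0 < 1 + t * x := by
    intro t ht; rcases ht with ⟨ht0, _⟩; nlinarith
  have hderiv : ∀ t ∈ Set.uIcc (0:ℝ) 1,
      HasDerivAt (fun t => (Real.log (1 + t * x) - Real.log (1 - t * x)) / (4 * x)
        + t / (2 * (1 + t * x))) (((1 + t * x) ^ 2 * (1 - t * x))⁻¹) t := by
    intro t ht
    rw [huIcc] at ht
    have hnem : 1 - t * x ≠ 0 := (hposm t ht).ne'
    have hnep : 1 + t * x ≠ 0 := (hposp t ht).ne'
    have h1 : HasDerivAt (fun t : ℝ => 1 + t * x) x t := by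
      simpa using ((hasDerivAt_id t).mul_const x).const_add 1
    have h1' : HasDerivAt (fun t : ℝ => 1 - t * x) (-x) t := by
      simpa using ((hasDerivAt_id t).mul_const x).const_sub 1
    have h2 : HasDerivAt (fun t : ℝ => Real.log (1 + t * x)) ((1 + t * x)⁻¹ * x) t :=
      (Real.hasDerivAt_log hnep).comp (h₂ := Real.log) t h1
    have h2' : HasDerivAt (fun t : ℝ => Real.log (1 - t * x)) ((1 - t * x)⁻¹ * (-x)) t :=
      (Real.hasDerivAt_log hnem).comp (h₂ := Real.log) t h1'
    have h3 := (h2.sub h2').div_const (4 * x)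
    have h4 : HasDerivAt (fun t : ℝ => 2 * (1 + t * x)) (2 * x) t := by
      simpa using h1.const_mul 2
    have h5 : HasDerivAt (fun t : ℝ => t / (2 * (1 + t * x)))
        ((1 * (2 * (1 + t * x)) - t * (2 * x)) / (2 * (1 + t * x)) ^ 2) t :=
      (hasDerivAt_id t).div h4 (by positivity)
    have h6 := h3.add h5
    refine h6.congr_deriv ?_
    field_simp [hnem, hnep, hx0.ne']
    ring
  have hint : IntervalIntegrable (fun t : ℝ => ((1 + t * x) ^ 2 * (1 - t * x))⁻¹)
      MeasureTheory.volume 0 1 := by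
    apply ContinuousOn.intervalIntegrable
    rw [huIcc]
    apply ContinuousOn.inv₀ (by fun_prop)
    intro t ht
    have := hposm t ht; have := hposp t ht
    positivity
  rw [integral_eq_sub_of_hasDerivAt hderiv hint]
  norm_num
  have h1x : (1:ℝ) + x ≠ 0 := by positivity
  field_simp
  ring


lemma cesaro_fa_norm {a x : ℝ} (ha0 : 0 < a) (ha1 : a < 1) (hx0 : 0 < x) (hx1 : x < 1)
    (hM : ∫ t in (0:ℝ)..1, (1 - t * x)⁻¹ = -Real.log (1 - x) / x)
    (hN : ∫ t in (0:ℝ)..1, (1 + t * (a * x))⁻¹ = Real.log (1 + a * x) / (a * x)) :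
    ‖cesaro (fun z => ((a:ℂ) + z) / (1 + (a:ℂ) * z)) ((x:ℝ) : ℂ)‖ =
      -Real.log (1 - x) / x - (1 - a) * (Real.log (1 + a * x) / (a * x)) := by
  set p : ℝ → ℝ := fun t => (a + t * x) / (1 + a * (t * x)) / (1 - t * x) with hp
  have hcast : (fun t : ℝ => ((a:ℂ) + (t:ℂ) * (x:ℂ)) / (1 + (a:ℂ) * ((t:ℂ) * (x:ℂ)))
      / (1 - (t:ℂ) * (x:ℂ))) = fun t : ℝ => ((p t : ℝ) : ℂ) := by
    funext t
    simp only [hp]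
    push_cast
    ring
  have h1 : cesaro (fun z => ((a:ℂ) + z) / (1 + (a:ℂ) * z)) ((x:ℝ) : ℂ)
      = ((∫ t in (0:ℝ)..1, p t : ℝ) : ℂ) := by
    unfold cesaro
    rw [show (fun t : ℝ => ((a:ℂ) + (t:ℂ) * (x:ℂ)) / (1 + (a:ℂ) * ((t:ℂ) * (x:ℂ)))
      / (1 - (t:ℂ) * (x:ℂ))) = fun t : ℝ => ((p t : ℝ) : ℂ) from hcast]
    exact intervalIntegral.integral_ofReal
  -- positivity facts
  have hposm : ∀ t ∈ Set.Icc (0:ℝ) 1, 0 < 1 - t * x := fun t ht => aux_pos hx1 hx0.le ht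
  have hposp : ∀ t ∈ Set.Icc (0:ℝ) 1, 0 < 1 + a * (t * x) := by
    intro t ht
    rcases ht with ⟨ht0, _⟩
    have : 0 ≤ a * (t * x) := by positivity
    linarith
  have huIcc : Set.uIcc (0:ℝ) 1 = Set.Icc 0 1 := Set.uIcc_of_le zero_le_one
  -- rewrite p as difference
  have hpe : Set.EqOn p (fun t => (1 - t * x)⁻¹ - (1 - a) * (1 + t * (a * x))⁻¹)
      (Set.uIcc (0:ℝ) 1) := by
    intro t ht
    rw [huIcc] at ht
    have h1 := hposm t ht
    have h2 := hposp t ht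
    have h2' : 0 < 1 + t * (a * x) := by
      rw [show 1 + t * (a * x) = 1 + a * (t * x) by ring]; exact h2
    simp only [hp]
    rw [div_div]
    rw [div_eq_iff (by positivity)]
    field_simp [show 1 + a * t * x ≠ 0 by rw [mul_assoc]; exact h2.ne']
    ring
  have hi1 : IntervalIntegrable (fun t : ℝ => (1 - t * x)⁻¹) MeasureTheory.volume 0 1 := by
    apply ContinuousOn.intervalIntegrable
    rw [huIcc]
    exact ContinuousOn.inv₀ (by fun_prop) (fun t ht => (hposm t ht).ne')
  have hi2 : IntervalIntegrable (fun t : ℝ => (1 - a) * (1 + t * (a * x))⁻¹)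
      MeasureTheory.volume 0 1 := by
    apply ContinuousOn.intervalIntegrable
    rw [huIcc]
    apply ContinuousOn.mul continuousOn_const
    apply ContinuousOn.inv₀ (by fun_prop)
    intro t ht
    have := hposp t ht
    have : 1 + t * (a * x) = 1 + a * (t * x) := by ring
    rw [this]
    exact (hposp t ht).ne'
  have h2 : ∫ t in (0:ℝ)..1, p t =
      -Real.log (1 - x) / x - (1 - a) * (Real.log (1 + a * x) / (a * x)) := by
    rw [intervalIntegral.integral_congr hpe, intervalIntegral.integral_sub hi1 hi2,
      intervalIntegral.integral_const_mul, hM, hN]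
  have h3 : 0 ≤ ∫ t in (0:ℝ)..1, p t := by
    apply intervalIntegral.integral_nonneg zero_le_one
    intro t ht
    have h1 := hposm t ht
    have h2 := hposp t ht
    have h0 : 0 ≤ a + t * x := by rcases ht with ⟨ht0, _⟩; nlinarith
    simp only [hp]
    positivity
  rw [h1, Complex.norm_real, Real.norm_eq_abs, abs_of_nonneg h3, h2]


lemma deriv_fa {a : ℝ} (w : ℂ) (hne : 1 + (a:ℂ) * w ≠ 0) :
    deriv (fun z => ((a:ℂ) + z) / (1 + (a:ℂ) * z)) w
      = (1 - (a:ℂ) ^ 2) / (1 + (a:ℂ) * w) ^ 2 := by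
  have hnum : HasDerivAt (fun z : ℂ => (a:ℂ) + z) 1 w := (hasDerivAt_id w).const_add _
  have hden : HasDerivAt (fun z : ℂ => 1 + (a:ℂ) * z) (a:ℂ) w := by
    simpa using ((hasDerivAt_id w).const_mul (a:ℂ)).const_add 1
  have h : HasDerivAt (fun z => ((a:ℂ) + z) / (1 + (a:ℂ) * z)) _ w := hnum.div hden hne
  rw [h.deriv]
  congr 1
  ring

lemma cesaro_deriv_norm {a x : ℝ} (ha0 : 0 < a) (ha1 : a < 1) (hx0 : 0 < x) (hx1 : x < 1) :
    ‖cesaro (deriv (fun z => ((a:ℂ) + z) / (1 + (a:ℂ) * z))) ((x:ℝ) : ℂ)‖ =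
      (1 - a ^ 2) * ∫ t in (0:ℝ)..1, ((1 + t * (a * x)) ^ 2 * (1 - t * x))⁻¹ := by
  have hposm : ∀ t ∈ Set.Icc (0:ℝ) 1, 0 < 1 - t * x := fun t ht => aux_pos hx1 hx0.le ht
  have hposp : ∀ t ∈ Set.Icc (0:ℝ) 1, 0 < 1 + t * (a * x) := by
    intro t ht
    rcases ht with ⟨ht0, _⟩
    have : 0 ≤ t * (a * x) := by positivity
    linarith
  have huIcc : Set.uIcc (0:ℝ) 1 = Set.Icc 0 1 := Set.uIcc_of_le zero_le_one
  set q : ℝ → ℝ := fun t => (1 - a ^ 2) / ((1 + t * (a * x)) ^ 2 * (1 - t * x)) with hq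
  have h1 : cesaro (deriv (fun z => ((a:ℂ) + z) / (1 + (a:ℂ) * z))) ((x:ℝ) : ℂ)
      = ((∫ t in (0:ℝ)..1, q t : ℝ) : ℂ) := by
    unfold cesaro
    rw [intervalIntegral.integral_congr (g := fun t : ℝ => ((q t : ℝ) : ℂ))]
    · exact intervalIntegral.integral_ofReal
    · intro t ht
      rw [huIcc] at ht
      have hpr : 0 < 1 + t * (a * x) := hposp t ht
      have hnc : 1 + (a:ℂ) * ((t:ℂ) * (x:ℂ)) ≠ 0 := by
        rw [show 1 + (a:ℂ) * ((t:ℂ) * (x:ℂ)) = (((1 + t * (a * x) : ℝ)) : ℂ) by push_cast; ring]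
        exact_mod_cast hpr.ne'
      simp only
      rw [deriv_fa _ hnc]
      simp only [hq]
      push_cast
      rw [show 1 + (a:ℂ) * ((t:ℂ) * (x:ℂ)) = 1 + (t:ℂ) * ((a:ℂ) * (x:ℂ)) by ring, div_div]
  have h3 : 0 ≤ ∫ t in (0:ℝ)..1, q t := by
    apply intervalIntegral.integral_nonneg zero_le_one
    intro t ht
    have h1 := hposm t ht
    have h2 := hposp t ht
    have ha2 : 0 ≤ 1 - a ^ 2 := by nlinarith
    simp only [hq]
    positivity
  have h4 : ∫ t in (0:ℝ)..1, q t
      = (1 - a ^ 2) * ∫ t in (0:ℝ)..1, ((1 + t * (a * x)) ^ 2 * (1 - t * x))⁻¹ := by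
    rw [← intervalIntegral.integral_const_mul]
    apply intervalIntegral.integral_congr
    intro t ht
    simp only [hq]
    rw [div_eq_mul_inv]
  rw [h1, Complex.norm_real, Real.norm_eq_abs, abs_of_nonneg h3, h4]


end AuxInt

noncomputable def Gfun (m : ℕ) (r : ℝ) : ℝ :=
  ((-r ^ m - Real.log (1 - r ^ m)) / (2 * r ^ m)) *
      (-(1/r ^ m) * Real.log (1 - r ^ m) + (1/r ^ m) * Real.log (1 + r ^ m)
        + 2 / (1 + r ^ m))
    + 2 * (r ^ 2 / (1 - r) + r + 2 + (2 / r) * Real.log (1 - r))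
    - (1/r ^ m) * Real.log (1 + r ^ m)

lemma Gfun_cont (m : ℕ) (hm : 0 < m) : ContinuousOn (Gfun m) (Ioo (0:ℝ) 1) := by
  intro s hs
  rcases hs with ⟨hs0, hs1⟩
  apply ContinuousAt.continuousWithinAt
  have hx0 : 0 < s ^ m := pow_pos hs0 m
  have hx1 : s ^ m < 1 := pow_lt_one₀ hs0.le hs1 hm.ne'
  have hpowc : ContinuousAt (fun r : ℝ => r ^ m) s := (continuous_pow m).continuousAt
  have h1m : ContinuousAt (fun r : ℝ => 1 - r ^ m) s :=
    (continuous_const.sub (continuous_pow m)).continuousAt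
  have h1p : ContinuousAt (fun r : ℝ => 1 + r ^ m) s :=
    (continuous_const.add (continuous_pow m)).continuousAt
  have hlog1 : ContinuousAt (fun r : ℝ => Real.log (1 - r ^ m)) s :=
    ContinuousAt.log h1m (by linarith : (1:ℝ) - s ^ m ≠ 0)
  have hlog2 : ContinuousAt (fun r : ℝ => Real.log (1 + r ^ m)) s :=
    ContinuousAt.log h1p (by linarith : (1:ℝ) + s ^ m ≠ 0)
  have hlog3 : ContinuousAt (fun r : ℝ => Real.log (1 - r)) s :=
    ContinuousAt.log (continuous_const.sub continuous_id).continuousAt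
      (by linarith : (1:ℝ) - s ≠ 0)
  have hinvx : ContinuousAt (fun r : ℝ => 1 / r ^ m) s :=
    ContinuousAt.div continuousAt_const hpowc hx0.ne'
  apply ContinuousAt.sub
  · apply ContinuousAt.add
    · apply ContinuousAt.mul
      · exact ContinuousAt.div (ContinuousAt.sub hpowc.neg hlog1)
          (continuousAt_const.mul hpowc) (by positivity)
      · exact ((hinvx.neg.mul hlog1).add (hinvx.mul hlog2)).add
          (ContinuousAt.div continuousAt_const h1p (by linarith))
    · apply continuousAt_const.mul
      apply ContinuousAt.add
      · apply ContinuousAt.add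
        · apply ContinuousAt.add
          · exact ContinuousAt.div (continuous_pow 2).continuousAt
              (continuous_const.sub continuous_id).continuousAt (by linarith)
          · exact continuousAt_id
        · exact continuousAt_const
      · exact (ContinuousAt.div continuousAt_const continuousAt_id hs0.ne').mul hlog3
  · exact hinvx.mul hlog2

lemma Gfun_pos_near_one (m : ℕ) (hm : 0 < m) {r : ℝ} (hr0 : 0 < r) (hr1 : r < 1) :
    ∃ s : ℝ, r < s ∧ s < 1 ∧ 0 < Gfun m s := by
  set u : ℝ := min ((1 - r)/2) (1/10000) with hu
  have hu0 : 0 < u := lt_min (by linarith) (by norm_num)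
  have hu4 : u ≤ 1/10000 := min_le_right _ _
  have hur : u ≤ (1 - r)/2 := min_le_left _ _
  set s : ℝ := 1 - u with hsdef
  have hs1 : s < 1 := by simp only [hsdef]; linarith
  have hrs : r < s := by simp only [hsdef]; linarith
  have hs0 : 0 < s := by simp only [hsdef]; linarith
  have hshalf : 1/2 ≤ s := by simp only [hsdef]; linarith
  have h1ms : 1 - s = u := by simp only [hsdef]; ring
  clear_value u
  clear_value s
  refine ⟨s, hrs, hs1, ?_⟩
  have hx0 : 0 < s ^ m := pow_pos hs0 m
  have hx1 : s ^ m < 1 := pow_lt_one₀ hs0.le hs1 hm.ne'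
  set x : ℝ := s ^ m with hxdef
  clear_value x
  -- A * B ≥ 0
  have hLx : Real.log (1 - x) ≤ -x := by
    have := Real.log_le_sub_one_of_pos (by linarith : (0:ℝ) < 1 - x)
    linarith
  have hLxnp : Real.log (1 - x) ≤ 0 := Real.log_nonpos (by linarith) (by linarith)
  have hPxnn : 0 ≤ Real.log (1 + x) := Real.log_nonneg (by linarith)
  have hA : 0 ≤ (-x - Real.log (1 - x)) / (2 * x) := by
    apply div_nonneg (by linarith) (by linarith)
  have hB : 0 ≤ -(1/x) * Real.log (1 - x) + (1/x) * Real.log (1 + x) + 2 / (1 + x) := by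
    have b1 : 0 ≤ -(1/x) * Real.log (1 - x) := by
      nlinarith [hLxnp, (by positivity : (0:ℝ) ≤ 1/x)]
    have b2 : 0 ≤ (1/x) * Real.log (1 + x) := by positivity
    have b3 : 0 ≤ 2 / (1 + x) := by positivity
    linarith
  -- D ≤ 1
  have hD : (1/x) * Real.log (1 + x) ≤ 1 := by
    have h1 : Real.log (1 + x) ≤ x := by
      have := Real.log_le_sub_one_of_pos (by linarith : (0:ℝ) < 1 + x)
      linarith
    calc (1/x) * Real.log (1 + x) ≤ (1/x) * x := by
          apply mul_le_mul_of_nonneg_left h1 (by positivity)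
      _ = 1 := by field_simp
  -- C(s) ≥ 1
  set v : ℝ := Real.sqrt u with hvdef
  have hv0 : 0 < v := Real.sqrt_pos.2 hu0
  have hvsq : v ^ 2 = u := Real.sq_sqrt hu0.le
  have hv : v ≤ 1/100 := by
    rw [hvdef]
    calc Real.sqrt u ≤ Real.sqrt (1/10000) := Real.sqrt_le_sqrt hu4
      _ = 1/100 := by
          rw [show (1:ℝ)/10000 = (1/100)^2 by norm_num, Real.sqrt_sq (by norm_num)]
  clear_value v
  have hw : 100 ≤ v⁻¹ := by
    rw [le_inv_comm₀ (by norm_num) hv0]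
    linarith
  have hlogv : -v⁻¹ ≤ Real.log v := by
    have h := Real.log_le_sub_one_of_pos (show (0:ℝ) < v⁻¹ by positivity)
    rw [Real.log_inv] at h
    linarith
  have hlogu : -2 * v⁻¹ ≤ Real.log u := by
    have : Real.log u = 2 * Real.log v := by
      rw [← hvsq, Real.log_pow]
      norm_num
    rw [this]
    linarith
  have hlogunp : Real.log u ≤ 0 := Real.log_nonpos hu0.le (by linarith)
  have hCs : 1 ≤ s ^ 2 / (1 - s) + s + 2 + (2 / s) * Real.log (1 - s) := by
    rw [h1ms]
    have c1 : (1/4) / u ≤ s ^ 2 / u := by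
      apply div_le_div_of_nonneg_right _ hu0.le
      nlinarith
    have c2 : 4 * Real.log u ≤ (2 / s) * Real.log u := by
      apply mul_le_mul_of_nonpos_right _ hlogunp
      rw [div_le_iff₀ hs0]
      linarith
    have c4 : (1/4) / u = (1/4) * v⁻¹ ^ 2 := by
      rw [← hvsq]
      field_simp
    have hwsq : 100 * v⁻¹ ≤ v⁻¹ ^ 2 := by nlinarith [hw]
    linarith [c1, c2, c4, hlogu, hwsq, hshalf, hw]
  -- conclude
  have hGs : Gfun m s = ((-x - Real.log (1 - x)) / (2 * x)) *
      (-(1/x) * Real.log (1 - x) + (1/x) * Real.log (1 + x) + 2 / (1 + x))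
    + 2 * (s ^ 2 / (1 - s) + s + 2 + (2 / s) * Real.log (1 - s))
    - (1/x) * Real.log (1 + x) := by
    simp only [Gfun, ← hxdef]
  rw [hGs]
  nlinarith [mul_nonneg hA hB, hCs, hD]


lemma Gfun_pos (m : ℕ) (hm : 0 < m) (Rm1 : ℝ) (hRm1 : Rm1 ∈ Ioo (0:ℝ) 1)
    (huniq : ∀ s ∈ Ioo (0:ℝ) 1, Gfun m s = 0 → s = Rm1)
    {r : ℝ} (hr : Rm1 < r) (hr1 : r < 1) : 0 < Gfun m r := by
  have hr0 : 0 < r := hRm1.1.trans hr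
  obtain ⟨s, hrs, hs1, hGs⟩ := Gfun_pos_near_one m hm hr0 hr1
  rcases lt_trichotomy (Gfun m r) 0 with hneg | hzero | hpos
  · exfalso
    have hc : ContinuousOn (Gfun m) (Icc r s) := by
      apply (Gfun_cont m hm).mono
      intro y hy
      exact ⟨hr0.trans_le hy.1, lt_of_le_of_lt hy.2 hs1⟩
    have h0mem : (0:ℝ) ∈ Icc (Gfun m r) (Gfun m s) := ⟨hneg.le, hGs.le⟩
    obtain ⟨c, hc1, hc2⟩ := intermediate_value_Icc hrs.le hc h0mem
    have hcI : c ∈ Ioo (0:ℝ) 1 := ⟨hr0.trans_le hc1.1, hc1.2.trans_lt hs1⟩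
    have hceq := huniq c hcI hc2
    rw [hceq] at hc1
    linarith [hc1.1]
  · have := huniq r ⟨hr0, hr1⟩ hzero
    linarith
  · exact hpos

set_option maxHeartbeats 4000000 in
theorem stmt3 (m : ℕ) (hm : 0 < m) (Rm1 : ℝ) (hRm1 : Rm1 ∈ Ioo (0:ℝ) 1)
    (hroot : ((-Rm1 ^ m - Real.log (1 - Rm1 ^ m)) / (2 * Rm1 ^ m)) *
          (-(1/Rm1 ^ m) * Real.log (1 - Rm1 ^ m) + (1/Rm1 ^ m) * Real.log (1 + Rm1 ^ m)
            + 2 / (1 + Rm1 ^ m))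
        + 2 * (Rm1 ^ 2 / (1 - Rm1) + Rm1 + 2 + (2 / Rm1) * Real.log (1 - Rm1))
        - (1/Rm1 ^ m) * Real.log (1 + Rm1 ^ m) = 0)
    (huniq : ∀ r ∈ Ioo (0:ℝ) 1,
        ((-r ^ m - Real.log (1 - r ^ m)) / (2 * r ^ m)) *
          (-(1/r ^ m) * Real.log (1 - r ^ m) + (1/r ^ m) * Real.log (1 + r ^ m)
            + 2 / (1 + r ^ m))
        + 2 * (r ^ 2 / (1 - r) + r + 2 + (2 / r) * Real.log (1 - r))
        - (1/r ^ m) * Real.log (1 + r ^ m) = 0 → r = Rm1) :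
    ∀ r : ℝ, Rm1 < r → r < 1 →
      ∃ a : ℝ, 0 < a ∧ a < 1 ∧
        (1 / r ^ m) * Real.log (1 / (1 - r ^ m)) <
          ‖cesaro (fun z => ((a:ℂ) + z) / (1 + (a:ℂ) * z)) ((r:ℂ) ^ m)‖
          + ‖cesaro (deriv (fun z => ((a:ℂ) + z) / (1 + (a:ℂ) * z))) ((r:ℂ) ^ m)‖
              * phi 1 (r ^ m)
          + ∑' k : ℕ, |(1 - a ^ 2) * (-a) ^ (k + 1)| * phi (k + 2) r := by
  intro r hr hr1
  have hr0 : 0 < r := hRm1.1.trans hr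
  have hx0 : 0 < r ^ m := pow_pos hr0 m
  have hx1 : r ^ m < 1 := pow_lt_one₀ hr0.le hr1 hm.ne'
  set x : ℝ := r ^ m with hxdef
  -- G positive at r
  have huniq' : ∀ s ∈ Ioo (0:ℝ) 1, Gfun m s = 0 → s = Rm1 := by
    intro s hs hGs
    simp only [Gfun] at hGs
    exact huniq s hs hGs
  have hGr : 0 < Gfun m r := Gfun_pos m hm Rm1 hRm1 huniq' hr hr1
  -- closed forms
  have hφ1 : phi 1 x = -Real.log (1 - x) / x - 1 := by
    rw [phi_eq hx0 hx1 1]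
    norm_num
  have hφ1nn : 0 ≤ phi 1 x := phi_nonneg hx0.le 1
  set Q : ℝ := -(1/x) * Real.log (1 - x) + (1/x) * Real.log (1 + x) + 2 / (1 + x) with hQ
  set J : ℝ := Q / 4 with hJ
  have hJval : ∫ t in (0:ℝ)..1, ((1 + t * x) ^ 2 * (1 - t * x))⁻¹ = J := int_J hx0 hx1
  have hJnn : 0 ≤ J := by
    rw [← hJval]
    apply intervalIntegral.integral_nonneg zero_le_one
    intro t ht
    have h1 := aux_pos hx1 hx0.le ht
    have h2 : 0 < 1 + t * x := by
      rcases ht with ⟨ht0, _⟩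
      have : 0 ≤ t * x := by positivity
      linarith
    positivity
  set Sig : ℝ := ∑' k : ℕ, phi (k + 2) r with hSigdef
  have hSigval : Sig = r ^ 2 / (1 - r) + r + 2 + (2 / r) * Real.log (1 - r) :=
    tsum_phi_eq hr0 hr1
  have hGeq : Gfun m r = 2 * (J * phi 1 x) + 2 * Sig - Real.log (1 + x) / x := by
    have h1 : Gfun m r = ((-x - Real.log (1 - x)) / (2 * x)) * Q
        + 2 * (r ^ 2 / (1 - r) + r + 2 + (2 / r) * Real.log (1 - r))
        - (1/x) * Real.log (1 + x) := by
      simp only [Gfun, ← hxdef, hQ]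
    rw [h1, ← hSigval, hφ1, hJ]
    have hxne : x ≠ 0 := hx0.ne'
    field_simp
    ring
  -- choose N with partial sum close to Sig
  have hsum : Summable (fun k : ℕ => phi (k + 2) r) := summable_phi hr0 hr1
  set ε : ℝ := Gfun m r / 8 with hε
  have hεpos : 0 < ε := by positivity
  have hev1 : ∀ᶠ n in Filter.atTop, Sig - ε < ∑ k ∈ Finset.range n, phi (k + 2) r := by
    apply hsum.hasSum.tendsto_sum_nat.eventually
    exact eventually_gt_nhds (by linarith)
  obtain ⟨N, hN⟩ := hev1.exists
  set P : ℝ := ∑ k ∈ Finset.range N, phi (k + 2) r with hP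
  have hPnn : 0 ≤ P := Finset.sum_nonneg fun k _ => phi_nonneg hr0.le _
  -- the auxiliary function of a
  set h : ℝ → ℝ := fun a => (1 + a) * (J * phi 1 x + a ^ N * P)
      - Real.log (1 + a * x) / (a * x) with hh
  have hcont : ContinuousAt h 1 := by
    apply ContinuousAt.sub
    · exact ((continuous_const.add continuous_id).mul (continuous_const.add
        ((continuous_pow N).mul continuous_const))).continuousAt
    · apply ContinuousAt.div
      · apply ContinuousAt.log
        · exact (continuous_const.add (continuous_id.mul continuous_const)).continuousAt
        · show (1:ℝ) + 1 * x ≠ 0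
          have : (0:ℝ) < 1 + 1 * x := by linarith
          exact this.ne'
      · exact (continuous_id.mul continuous_const).continuousAt
      · show (1:ℝ) * x ≠ 0
        have : (0:ℝ) < 1 * x := by linarith
        exact this.ne'
  have hone : 0 < h 1 := by
    have h1 : h 1 = 2 * (J * phi 1 x + P) - Real.log (1 + x) / x := by
      simp only [hh]
      norm_num
    rw [h1]
    linarith only [hN, hGeq, hGr, hε]
  have hev : ∀ᶠ a in nhds (1:ℝ), 0 < h a := hcont.eventually (eventually_gt_nhds hone)
  rw [Metric.eventually_nhds_iff] at hev
  obtain ⟨δ, hδ, hball⟩ := hev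
  set a : ℝ := max (1/2) (1 - δ/2) with ha
  have ha0 : 0 < a := lt_of_lt_of_le (by norm_num) (le_max_left _ _)
  have ha1 : a < 1 := max_lt (by norm_num) (by linarith)
  have hamem : a ∈ Icc (0:ℝ) 1 := ⟨ha0.le, ha1.le⟩
  have hha : 0 < h a := by
    apply hball
    rw [Real.dist_eq, abs_of_nonpos (by linarith)]
    have : 1 - δ/2 ≤ a := le_max_right _ _
    linarith
  refine ⟨a, ha0, ha1, ?_⟩
  -- compute the three quantities
  have haxpos : 0 < a * x := by positivity
  have hM := int_one_add haxpos
  have hMint := int_one_sub hx0 hx1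
  have hnorm1 : ‖cesaro (fun z => ((a:ℂ) + z) / (1 + (a:ℂ) * z)) ((x:ℝ) : ℂ)‖ =
      -Real.log (1 - x) / x - (1 - a) * (Real.log (1 + a * x) / (a * x)) :=
    cesaro_fa_norm ha0 ha1 hx0 hx1 hMint hM
  set Ia : ℝ := ∫ t in (0:ℝ)..1, ((1 + t * (a * x)) ^ 2 * (1 - t * x))⁻¹ with hIa
  have hnorm2 : ‖cesaro (deriv (fun z => ((a:ℂ) + z) / (1 + (a:ℂ) * z))) ((x:ℝ) : ℂ)‖ =
      (1 - a ^ 2) * Ia := cesaro_deriv_norm ha0 ha1 hx0 hx1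
  -- J ≤ Ia
  have hposm : ∀ t ∈ Set.Icc (0:ℝ) 1, 0 < 1 - t * x := fun t ht => aux_pos hx1 hx0.le ht
  have hpospa : ∀ t ∈ Set.Icc (0:ℝ) 1, 0 < 1 + t * (a * x) := by
    intro t ht
    rcases ht with ⟨ht0, _⟩
    have : 0 ≤ t * (a * x) := by positivity
    linarith
  have hposp : ∀ t ∈ Set.Icc (0:ℝ) 1, 0 < 1 + t * x := by
    intro t ht
    rcases ht with ⟨ht0, _⟩
    have : 0 ≤ t * x := by positivity
    linarith
  have huIcc : Set.uIcc (0:ℝ) 1 = Set.Icc 0 1 := Set.uIcc_of_le zero_le_one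
  have hint1 : IntervalIntegrable (fun t : ℝ => ((1 + t * x) ^ 2 * (1 - t * x))⁻¹)
      MeasureTheory.volume 0 1 := by
    apply ContinuousOn.intervalIntegrable
    rw [huIcc]
    apply ContinuousOn.inv₀ (by fun_prop)
    intro t ht
    have := hposm t ht; have := hposp t ht
    positivity
  have hint2 : IntervalIntegrable (fun t : ℝ => ((1 + t * (a * x)) ^ 2 * (1 - t * x))⁻¹)
      MeasureTheory.volume 0 1 := by
    apply ContinuousOn.intervalIntegrable
    rw [huIcc]
    apply ContinuousOn.inv₀ (by fun_prop)
    intro t ht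
    have := hposm t ht; have := hpospa t ht
    positivity
  have hJIa : J ≤ Ia := by
    rw [← hJval, hIa]
    apply intervalIntegral.integral_mono_on zero_le_one hint1 hint2
    intro t ht
    have h1 := hposm t ht
    have h2 := hpospa t ht
    have h3 := hposp t ht
    apply inv_anti₀ (by positivity)
    apply mul_le_mul_of_nonneg_right _ h1.le
    apply pow_le_pow_left₀ h2.le
    have : t * (a * x) ≤ t * x := by
      rcases ht with ⟨ht0, _⟩
      nlinarith [mul_nonneg (mul_nonneg ht0 hx0.le) (by linarith : (0:ℝ) ≤ 1 - a)]
    linarith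
  -- the series with a
  have hSsummand_nonneg : ∀ k : ℕ, 0 ≤ a ^ (k+1) * phi (k + 2) r :=
    fun k => mul_nonneg (by positivity) (phi_nonneg hr0.le _)
  have hSsummable : Summable (fun k : ℕ => a ^ (k+1) * phi (k + 2) r) := by
    apply Summable.of_nonneg_of_le hSsummand_nonneg _ hsum
    intro k
    apply mul_le_of_le_one_left (phi_nonneg hr0.le _)
    exact pow_le_one₀ ha0.le ha1.le
  set S : ℝ := ∑' k : ℕ, a ^ (k+1) * phi (k + 2) r with hS
  have htsum_eq : (∑' k : ℕ, |(1 - a ^ 2) * (-a) ^ (k + 1)| * phi (k + 2) r)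
      = (1 - a ^ 2) * S := by
    rw [hS, ← tsum_mul_left]
    congr 1
    funext k
    have h1 : |(1 - a ^ 2) * (-a) ^ (k + 1)| = (1 - a ^ 2) * a ^ (k + 1) := by
      rw [abs_mul, abs_pow, abs_neg, abs_of_pos ha0, abs_of_pos (by nlinarith : (0:ℝ) < 1 - a ^ 2)]
    rw [h1]
    ring
  have hSge : a ^ N * P ≤ S := by
    rw [hS, hP, Finset.mul_sum]
    calc ∑ k ∈ Finset.range N, a ^ N * phi (k + 2) r
        ≤ ∑ k ∈ Finset.range N, a ^ (k+1) * phi (k + 2) r := by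
          apply Finset.sum_le_sum
          intro k hk
          apply mul_le_mul_of_nonneg_right _ (phi_nonneg hr0.le _)
          apply pow_le_pow_of_le_one ha0.le ha1.le
          simp only [Finset.mem_range] at hk
          omega
      _ ≤ S := Summable.sum_le_tsum _ (fun k _ => hSsummand_nonneg k) hSsummable
  -- rewrite the complex argument
  have hcx : ((r : ℂ)) ^ m = ((x : ℝ) : ℂ) := by
    rw [hxdef]
    push_cast
    ring
  rw [hcx, hnorm1, hnorm2, htsum_eq]
  -- rewrite LHS
  have hLHS : (1 / x) * Real.log (1 / (1 - x)) = -Real.log (1 - x) / x := by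
    rw [one_div (1 - x), Real.log_inv]
    ring
  rw [hLHS]
  -- final inequality
  have hha' : 0 < (1 + a) * (J * phi 1 x + a ^ N * P) - Real.log (1 + a * x) / (a * x) := hha
  have ha2nn : (0:ℝ) ≤ 1 - a ^ 2 := by nlinarith
  have t2 : (1 - a ^ 2) * J * phi 1 x ≤ (1 - a ^ 2) * Ia * phi 1 x := by
    apply mul_le_mul_of_nonneg_right _ hφ1nn
    exact mul_le_mul_of_nonneg_left hJIa ha2nn
  have t3 : (1 - a ^ 2) * (a ^ N * P) ≤ (1 - a ^ 2) * S :=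
    mul_le_mul_of_nonneg_left hSge ha2nn
  have t4 : 0 < (1 - a) * ((1 + a) * (J * phi 1 x + a ^ N * P)
      - Real.log (1 + a * x) / (a * x)) := mul_pos (by linarith) hha'
  linarith only [t2, t3, t4]
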